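/- arXiv:2208.11104 — 6 statements merged into one kernel-verified Lean document; each statement's English description precedes it below -/
import Mathlib

section
/- Let 0 < α < 1 and let a < b < c be real numbers. Then the integral ∫_a^b (c − s)^{−α} (s − (a+b)/2) ds is strictly positive. -/
/-!
Since `s - m` has mean zero on `[a, b]`, where `m` is the midpoint, subtracting the constant `f m`
from `f` does not change the integral. For strictly increasing `f` the new integrand
`(f s - f m) (s - m)` is positive away from `m`. The kernel `(c - s)^(-α)` is strictly increasing
on `[a, b]` since `b < c` and `α > 0`.
-/

open intervalIntegral Set
open MeasureTheory (volume)

lemma integral_sub_midpoint_eq_zero (a b : ℝ) : ∫ s in a..b, (s - (a + b) / 2) = 0 := by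
  rw [integral_sub intervalIntegrable_id intervalIntegrable_const, integral_id, integral_const,
    smul_eq_mul]
  ring

lemma integral_sub_const_mul_sub_midpoint {f : ℝ → ℝ} {a b : ℝ}
    (hf : IntervalIntegrable f volume a b) (C : ℝ) :
    ∫ s in a..b, (f s - C) * (s - (a + b) / 2) = ∫ s in a..b, f s * (s - (a + b) / 2) := by
  have hC : ∫ s in a..b, C * (s - (a + b) / 2) = 0 := by
    rw [integral_const_mul, integral_sub_midpoint_eq_zero, mul_zero]
  simp only [sub_mul]
  rw [integral_sub (hf.mul_continuousOn (g := fun s ↦ s - (a + b) / 2) (by fun_prop))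
    ((by fun_prop : Continuous fun s ↦ C * (s - (a + b) / 2)).intervalIntegrable a b), hC,
    sub_zero]

lemma integral_mul_sub_midpoint_pos_of_strictMonoOn {f : ℝ → ℝ} {a b : ℝ} (hab : a < b)
    (hf : StrictMonoOn f (Icc a b)) : 0 < ∫ s in a..b, f s * (s - (a + b) / 2) := by
  have ham : a < (a + b) / 2 := by linarith
  have hmb : (a + b) / 2 < b := by linarith
  set m := (a + b) / 2
  have hm : m ∈ Icc a b := ⟨ham.le, hmb.le⟩
  set g : ℝ → ℝ := fun s ↦ (f s - f m) * (s - m)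
  have hg_int : ∀ x y, uIcc x y ⊆ Icc a b → IntervalIntegrable g volume x y := fun x y hxy ↦
    ((hf.monotoneOn.mono hxy).intervalIntegrable.sub intervalIntegrable_const).mul_continuousOn
      (continuousOn_id.sub continuousOn_const)
  have hg_am := hg_int a m (uIcc_subset_Icc (left_mem_Icc.2 hab.le) hm)
  have hg_mb := hg_int m b (uIcc_subset_Icc hm (right_mem_Icc.2 hab.le))
  have hleft : 0 < ∫ s in a..m, g s :=
    intervalIntegral_pos_of_pos_on hg_am (fun s hs ↦ mul_pos_of_neg_of_neg
      (sub_neg.2 (hf ⟨hs.1.le, hs.2.le.trans hmb.le⟩ hm hs.2)) (sub_neg.2 hs.2)) ham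
  have hright : 0 < ∫ s in m..b, g s :=
    intervalIntegral_pos_of_pos_on hg_mb (fun s hs ↦ mul_pos
      (sub_pos.2 (hf hm ⟨ham.le.trans hs.1.le, hs.2.le⟩ hs.1)) (sub_pos.2 hs.1)) hmb
  have hfi : IntervalIntegrable f volume a b :=
    (hf.monotoneOn.mono (uIcc_of_le hab.le).subset).intervalIntegrable
  rw [← integral_sub_const_mul_sub_midpoint hfi (f m),
    ← integral_add_adjacent_intervals hg_am hg_mb]
  exact add_pos hleft hright

lemma strictMonoOn_rpow_neg_const_sub {α : ℝ} (hα : 0 < α) (c : ℝ) :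
    StrictMonoOn (fun s : ℝ ↦ (c - s) ^ (-α)) (Iio c) := fun _ _ _ hy hxy ↦
  Real.rpow_lt_rpow_of_neg (sub_pos.2 hy) (by linarith) (neg_neg_of_pos hα)

theorem stmt3_general (α a b c : ℝ) (hα0 : 0 < α) (hab : a < b) (hbc : b < c) :
    0 < ∫ s in a..b, (c - s) ^ (-α) * (s - (a + b) / 2) :=
  integral_mul_sub_midpoint_pos_of_strictMonoOn hab <|
    (strictMonoOn_rpow_neg_const_sub hα0 c).mono fun _ hs ↦ hs.2.trans_lt hbc

/-- For `0 < α < 1` and `a < b < c`, the integral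
`∫_a^b (c - s)^{-α} (s - (a+b)/2) ds` is strictly positive. -/
theorem stmt3 (α a b c : ℝ) (hα0 : 0 < α) (hα1 : α < 1) (hab : a < b) (hbc : b < c) :
    0 < ∫ s in a..b, (c - s) ^ (-α) * (s - (a + b) / 2) :=
  stmt3_general α a b c hα0 hab hbc
end

section
/- For the L2-1_σ weights on the graded mesh with σ = 1 − α/2, one has for every n with 2 ≤ n ≤ N the upper bound c_{n,n} ≤ τ_n^{−α} [ (1−σ)^{1−α}/Γ(2−α) + (α/(6Γ(1−α))) (1−σ)^{−(1+α)} ]. -/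
open MeasureTheory

/-- The graded temporal mesh `t_n = T (n/N)^r` on `[0,T]`. -/
noncomputable def meshT (T r : ℝ) (N : ℕ) (n : ℕ) : ℝ := T * ((n : ℝ) / (N : ℝ)) ^ r

/-- The time steps `τ_n = t_n - t_{n-1}`. -/
noncomputable def meshTau (T r : ℝ) (N : ℕ) (n : ℕ) : ℝ := meshT T r N n - meshT T r N (n - 1)

/-- The intermediate points `t_{n-σ} = (1-σ) t_n + σ t_{n-1}`. -/
noncomputable def meshTSig (T r σ : ℝ) (N : ℕ) (n : ℕ) : ℝ :=
  (1 - σ) * meshT T r N n + σ * meshT T r N (n - 1)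

/-- The coefficients `a_{n,j}` of the L2-1_σ scheme:
`a_{n,j} = (1/Γ(1-α)) ∫_{t_{j-1}}^{t_j} (t_{n-σ}-s)^{-α} ds` for `j ≤ n-1`, and
`a_{n,n} = (1/Γ(1-α)) ∫_{t_{n-1}}^{t_{n-σ}} (t_{n-σ}-s)^{-α} ds`. -/
noncomputable def wA (T r α σ : ℝ) (N : ℕ) (n j : ℕ) : ℝ :=
  if j = n then
    (1 / Real.Gamma (1 - α)) *
      ∫ s in (meshT T r N (n - 1))..(meshTSig T r σ N n), (meshTSig T r σ N n - s) ^ (-α)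
  else
    (1 / Real.Gamma (1 - α)) *
      ∫ s in (meshT T r N (j - 1))..(meshT T r N j), (meshTSig T r σ N n - s) ^ (-α)

/-- The coefficients `b_{n,j}` of the L2-1_σ scheme:
`b_{n,j} = (2/(t_{j+1}-t_{j-1})) (1/Γ(1-α)) ∫_{t_{j-1}}^{t_j} (t_{n-σ}-s)^{-α}
(s - (t_{j-1}+t_j)/2) ds`. -/
noncomputable def wB (T r α σ : ℝ) (N : ℕ) (n j : ℕ) : ℝ :=
  (2 / (meshT T r N (j + 1) - meshT T r N (j - 1))) * (1 / Real.Gamma (1 - α)) *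
    ∫ s in (meshT T r N (j - 1))..(meshT T r N j),
      (meshTSig T r σ N n - s) ^ (-α) * (s - (meshT T r N (j - 1) + meshT T r N j) / 2)

/-- The L2-1_σ weights `c_{n,j}`: `c_{1,1} = τ_1^{-1} a_{1,1}`, and for `n ≥ 2`:
`c_{n,1} = τ_1^{-1}(a_{n,1} - b_{n,1})`,
`c_{n,j} = τ_j^{-1}(a_{n,j} - b_{n,j} + b_{n,j-1})` for `2 ≤ j ≤ n-1`, and
`c_{n,n} = τ_n^{-1}(a_{n,n} + b_{n,n-1})`. -/
noncomputable def wC (T r α σ : ℝ) (N : ℕ) (n j : ℕ) : ℝ :=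
  if n = 1 then (meshTau T r N 1)⁻¹ * wA T r α σ N 1 1
  else if j = n then (meshTau T r N n)⁻¹ * (wA T r α σ N n n + wB T r α σ N n (n - 1))
  else if j = 1 then (meshTau T r N 1)⁻¹ * (wA T r α σ N n 1 - wB T r α σ N n 1)
  else (meshTau T r N j)⁻¹ * (wA T r α σ N n j - wB T r α σ N n j + wB T r α σ N n (j - 1))

/-!
`c_{n,n} = τ_n⁻¹ (a_{n,n} + b_{n,n-1})`, and `a_{n,n} = ((1-σ) τ_n)^{1-α} / Γ(2-α)` exactly, because
`t_{n-σ} - t_{n-1} = (1-σ) τ_n`. In `b_{n,n-1}` the weight `s - (t_{n-2}+t_{n-1})/2` has mean zero,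
so only the deviation of the kernel `(t_{n-σ}-s)^{-α}` from its midpoint value counts; as
`t_{n-σ} - s ≥ (1-σ) τ_n` there, the kernel is Lipschitz with constant `α ((1-σ) τ_n)^{-1-α}`, and
the integral is at most that constant times `τ_{n-1}^3 / 12`. On the graded mesh, convexity of
`x ↦ x^r` gives `τ_{n-1} ≤ τ_n`, and the prefactor `2 / (t_n - t_{n-2})` is at most `2 / τ_n`.
-/

open Set
open scoped NNReal

theorem integral_sub_rpow_neg {a b α : ℝ} (hα : α < 1) :
    ∫ s in a..b, (b - s) ^ (-α) = (b - a) ^ (1 - α) / (1 - α) := by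
  rw [intervalIntegral.integral_comp_sub_left (fun x => x ^ (-α)), sub_self,
    integral_rpow (Or.inl (by linarith)), Real.zero_rpow (by linarith)]
  ring_nf

theorem lipschitzOnWith_rpow_neg {α δ : ℝ} (hα : 0 ≤ α) (hδ : 0 < δ) :
    LipschitzOnWith (α * δ ^ (-α - 1)).toNNReal (fun x : ℝ => x ^ (-α)) (Ici δ) := by
  refine LipschitzOnWith.of_dist_le' fun x hx y hy => ?_
  have hpos : ∀ z ∈ Ici δ, 0 < z := fun z hz => hδ.trans_le hz
  simpa only [Real.dist_eq, Real.norm_eq_abs] using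
    (convex_Ici δ).norm_image_sub_le_of_norm_deriv_le
      (fun z hz => (Real.hasDerivAt_rpow_const (Or.inl (hpos z hz).ne')).differentiableAt)
      (fun z hz => by
        rw [(Real.hasDerivAt_rpow_const (Or.inl (hpos z hz).ne')).deriv, Real.norm_eq_abs,
          abs_mul, abs_neg, abs_of_nonneg hα, abs_of_pos (Real.rpow_pos_of_pos (hpos z hz) _)]
        exact mul_le_mul_of_nonneg_left
          (Real.rpow_le_rpow_of_nonpos hδ hz (by linarith)) hα) hy hx

theorem lipschitzOnWith_const_sub_rpow_neg {α δ : ℝ} (hα : 0 ≤ α) (hδ : 0 < δ) (c : ℝ) :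
    LipschitzOnWith (α * δ ^ (-α - 1)).toNNReal (fun s : ℝ => (c - s) ^ (-α)) (Iic (c - δ)) :=
  LipschitzOnWith.of_dist_le_mul fun x hx y hy => by
    simpa only [dist_sub_left] using (lipschitzOnWith_rpow_neg hα hδ).dist_le_mul (c - x)
      (by simp only [mem_Ici]; linarith [mem_Iic.1 hx]) (c - y)
      (by simp only [mem_Ici]; linarith [mem_Iic.1 hy])

theorem integral_mul_sub_midpoint_le {g : ℝ → ℝ} {K : ℝ≥0} {a b : ℝ} (hab : a ≤ b)
    (hg : LipschitzOnWith K g (Icc a b)) :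
    ∫ s in a..b, g s * (s - (a + b) / 2) ≤ K * (b - a) ^ 3 / 12 := by
  set m := (a + b) / 2 with hm_def
  have hm : m ∈ Icc a b := ⟨by rw [hm_def]; linarith, by rw [hm_def]; linarith⟩
  have hcont : ContinuousOn g (uIcc a b) := uIcc_of_le hab ▸ hg.continuousOn
  have hint_lin : ∫ s in a..b, (s - m) = 0 := by
    rw [intervalIntegral.integral_comp_sub_right (fun x => x), integral_id]
    ring
  have hint_sq : ∫ s in a..b, (s - m) ^ 2 = (b - a) ^ 3 / 12 := by
    rw [intervalIntegral.integral_comp_sub_right (fun x => x ^ 2), integral_pow]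
    ring
  have hcentre : ∫ s in a..b, g s * (s - m) = ∫ s in a..b, (g s - g m) * (s - m) := by
    simp only [sub_mul]
    rw [intervalIntegral.integral_sub, intervalIntegral.integral_const_mul, hint_lin, mul_zero,
      sub_zero]
    · exact (hcont.mul (by fun_prop)).intervalIntegrable
    · exact (by fun_prop : Continuous fun s => g m * (s - m)).intervalIntegrable _ _
  calc ∫ s in a..b, g s * (s - (a + b) / 2) = ∫ s in a..b, (g s - g m) * (s - m) := hcentre
    _ ≤ ∫ s in a..b, (K : ℝ) * (s - m) ^ 2 := by
        refine intervalIntegral.integral_mono_on hab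
          (((hcont.sub continuousOn_const).mul (by fun_prop)).intervalIntegrable)
          ((by fun_prop : Continuous fun s => (K : ℝ) * (s - m) ^ 2).intervalIntegrable _ _)
          fun s hs => ?_
        have hlip := hg.dist_le_mul s hs m hm
        rw [Real.dist_eq, Real.dist_eq] at hlip
        calc (g s - g m) * (s - m) ≤ |g s - g m| * |s - m| := by
              rw [← abs_mul]; exact le_abs_self _
          _ ≤ K * |s - m| * |s - m| := by gcongr
          _ = K * (s - m) ^ 2 := by rw [mul_assoc, abs_mul_abs_self, sq]
    _ = K * (b - a) ^ 3 / 12 := by rw [intervalIntegral.integral_const_mul, hint_sq]; ring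

section Mesh

variable {T r : ℝ} {N : ℕ}

theorem meshT_strictMono (hT : 0 < T) (hr : 0 < r) (hN : 0 < N) : StrictMono (meshT T r N) :=
  fun i j hij => by
    unfold meshT
    gcongr

theorem meshTau_monotone (hT : 0 ≤ T) (hr : 1 ≤ r) : Monotone (meshTau T r N) := by
  refine monotone_nat_of_le_succ fun m => ?_
  cases m with
  | zero =>
    simp only [meshTau, meshT, zero_tsub, zero_add, Nat.sub_self, Nat.cast_zero, zero_div,
      Real.zero_rpow (by linarith : r ≠ 0), mul_zero, sub_zero, sub_self]
    positivity
  | succ k =>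
    have hmid := (convexOn_rpow hr).2 (mem_Ici.2 (by positivity : (0 : ℝ) ≤ k / N))
      (mem_Ici.2 (by positivity : (0 : ℝ) ≤ (k + 2 : ℕ) / N)) (by norm_num : (0 : ℝ) ≤ 1 / 2)
      (by norm_num : (0 : ℝ) ≤ 1 / 2) (by norm_num)
    have hk : (1 / 2 : ℝ) * ((k : ℝ) / N) + 1 / 2 * (((k + 2 : ℕ) : ℝ) / N) = (k + 1 : ℕ) / N := by
      push_cast; ring
    simp only [smul_eq_mul, hk] at hmid
    simp only [meshTau, meshT, Nat.add_sub_cancel]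
    nlinarith [mul_le_mul_of_nonneg_left hmid hT]

theorem meshTSig_sub_meshT_pred (σ : ℝ) (n : ℕ) :
    meshTSig T r σ N n - meshT T r N (n - 1) = (1 - σ) * meshTau T r N n := by
  unfold meshTSig meshTau
  ring

end Mesh

section Weights

variable {T r α σ : ℝ} {N : ℕ}

theorem wA_self (hα : α < 1) (n : ℕ) :
    wA T r α σ N n n =
      (meshTSig T r σ N n - meshT T r N (n - 1)) ^ (1 - α) / Real.Gamma (2 - α) := by
  have hΓ : Real.Gamma (2 - α) = (1 - α) * Real.Gamma (1 - α) := by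
    rw [show 2 - α = (1 - α) + 1 by ring, Real.Gamma_add_one (by linarith)]
  rw [wA, if_pos rfl, integral_sub_rpow_neg hα, hΓ]
  field_simp

theorem wB_succ_self_le (hT : 0 < T) (hr : 1 ≤ r) (hN : 0 < N) (hα0 : 0 < α) (hα1 : α < 1)
    (hσ : σ < 1) (m : ℕ) :
    wB T r α σ N (m + 1) m ≤ α / (6 * Real.Gamma (1 - α)) *
      ((1 - σ) * meshTau T r N (m + 1)) ^ (-(1 + α)) * meshTau T r N (m + 1) ^ 2 := by
  have hmono := meshT_strictMono hT (zero_lt_one.trans_le hr) hN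
  set τ := meshTau T r N (m + 1) with hτ_def
  set δ := (1 - σ) * τ with hδ_def
  have hτ : 0 < τ := sub_pos.2 (hmono (by omega))
  have hδ : 0 < δ := mul_pos (by linarith) hτ
  have hΓ : 0 < Real.Gamma (1 - α) := Real.Gamma_pos_of_pos (by linarith)
  have hpred : meshT T r N (m - 1) ≤ meshT T r N m := hmono.monotone (by omega)
  have hsig : meshTSig T r σ N (m + 1) - δ = meshT T r N m := by
    rw [hδ_def, hτ_def, ← meshTSig_sub_meshT_pred, Nat.add_sub_cancel]
    ring
  have hint : ∫ s in meshT T r N (m - 1)..meshT T r N m,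
      (meshTSig T r σ N (m + 1) - s) ^ (-α) * (s - (meshT T r N (m - 1) + meshT T r N m) / 2) ≤
      α * δ ^ (-α - 1) * τ ^ 3 / 12 := by
    refine (integral_mul_sub_midpoint_le hpred
      ((lipschitzOnWith_const_sub_rpow_neg hα0.le hδ _).mono ?_)).trans ?_
    · rw [hsig]
      exact Icc_subset_Iic_self
    · rw [Real.coe_toNNReal _ (by positivity)]
      gcongr
      exact meshTau_monotone hT.le hr (Nat.le_succ m)
  have hwidth : τ ≤ meshT T r N (m + 1) - meshT T r N (m - 1) := by
    rw [hτ_def, meshTau, Nat.add_sub_cancel]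
    linarith
  calc wB T r α σ N (m + 1) m
      ≤ 2 / (meshT T r N (m + 1) - meshT T r N (m - 1)) * (1 / Real.Gamma (1 - α)) *
          (α * δ ^ (-α - 1) * τ ^ 3 / 12) := by
        rw [wB]
        exact mul_le_mul_of_nonneg_left hint (by
          have := hτ.trans_le hwidth
          positivity)
    _ ≤ 2 / τ * (1 / Real.Gamma (1 - α)) * (α * δ ^ (-α - 1) * τ ^ 3 / 12) := by gcongr
    _ = α / (6 * Real.Gamma (1 - α)) * δ ^ (-(1 + α)) * τ ^ 2 := by
        rw [show -α - 1 = -(1 + α) by ring]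
        field_simp
        ring

end Weights

theorem stmt5_general (T r α σ : ℝ) (hT : 0 < T) (hr : 1 ≤ r) (hα0 : 0 < α) (hα1 : α < 1)
    (hσ : σ = 1 - α / 2) (N : ℕ) :
    ∀ n : ℕ, 2 ≤ n → n ≤ N →
      wC T r α σ N n n ≤ (meshTau T r N n) ^ (-α) *
        ((1 - σ) ^ (1 - α) / Real.Gamma (2 - α) +
          α / (6 * Real.Gamma (1 - α)) * (1 - σ) ^ (-(1 + α))) := by
  intro n hn hnN
  obtain ⟨m, rfl⟩ : ∃ m, n = m + 1 := ⟨n - 1, by omega⟩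
  have h1σ : 0 < 1 - σ := by linarith
  set τ := meshTau T r N (m + 1)
  have hτ : 0 < τ := sub_pos.2 (meshT_strictMono hT (by linarith) (by omega) (by omega))
  have hwC : wC T r α σ N (m + 1) (m + 1) =
      τ⁻¹ * (((1 - σ) * τ) ^ (1 - α) / Real.Gamma (2 - α) + wB T r α σ N (m + 1) m) := by
    rw [wC, if_neg (by omega), if_pos rfl, wA_self hα1, meshTSig_sub_meshT_pred,
      Nat.add_sub_cancel]
  have hpow_one_sub : τ ^ (1 - α) = τ ^ (-α) * τ := by
    rw [sub_eq_neg_add, Real.rpow_add hτ, Real.rpow_one]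
  have hpow_neg_one_sub : τ ^ (-(1 + α)) = τ ^ (-α) * τ⁻¹ := by
    rw [neg_add', sub_eq_add_neg, Real.rpow_add hτ, Real.rpow_neg_one, mul_comm]
  calc wC T r α σ N (m + 1) (m + 1)
      ≤ τ⁻¹ * (((1 - σ) * τ) ^ (1 - α) / Real.Gamma (2 - α) +
          α / (6 * Real.Gamma (1 - α)) * ((1 - σ) * τ) ^ (-(1 + α)) * τ ^ 2) := by
        rw [hwC]
        gcongr
        exact wB_succ_self_le hT hr (by omega) hα0 hα1 (by linarith) m
    _ = τ ^ (-α) * ((1 - σ) ^ (1 - α) / Real.Gamma (2 - α) +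
          α / (6 * Real.Gamma (1 - α)) * (1 - σ) ^ (-(1 + α))) := by
        rw [Real.mul_rpow h1σ.le hτ.le, Real.mul_rpow h1σ.le hτ.le, hpow_one_sub,
          hpow_neg_one_sub]
        field_simp

/-- Upper bound for the diagonal L2-1_σ weight on the graded mesh with `σ = 1 - α/2`:
for every `2 ≤ n ≤ N`,
`c_{n,n} ≤ τ_n^{-α} [ (1-σ)^{1-α}/Γ(2-α) + (α/(6Γ(1-α))) (1-σ)^{-(1+α)} ]`. -/
theorem stmt5 (T r α σ : ℝ) (hT : 0 < T) (hr : 1 ≤ r) (hα0 : 0 < α) (hα1 : α < 1)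
    (hσ : σ = 1 - α / 2) (N : ℕ) (hN : 2 ≤ N) :
    ∀ n : ℕ, 2 ≤ n → n ≤ N →
      wC T r α σ N n n ≤ (meshTau T r N n) ^ (-α) *
        ((1 - σ) ^ (1 - α) / Real.Gamma (2 - α) +
          α / (6 * Real.Gamma (1 - α)) * (1 - σ) ^ (-(1 + α))) :=
  stmt5_general T r α σ hT hr hα0 hα1 hσ N
end

section
/- Let V be a real inner product space, let n ≥ 1 be an integer, let u^0, u^1, …, u^n ∈ V, and let c_1, c_2, …, c_n be real numbers with 0 < c_1 ≤ c_2 ≤ … ≤ c_n. Define D = c_n u^n + Σ_{j=1}^{n−1} (c_j − c_{j+1}) u^j − c_1 u^0. Then ⟨D, u^n⟩ ≥ (1/2) [ c_n ‖u^n‖² + Σ_{j=1}^{n−1} (c_j − c_{j+1}) ‖u^j‖² − c_1 ‖u^0‖² ]. -/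
/-!
Write `D = Σ_k w_k u^k` with `w_n = c_n`, `w_j = c_j - c_{j+1}` for `1 ≤ j < n` and `w_0 = -c_1`.
The weights sum to zero and all of them except `w_n` are nonpositive, so
`⟨D, u^n⟩ - ½ Σ_k w_k ‖u^k‖² = -½ Σ_{k<n} w_k ‖u^k - u^n‖² ≥ 0`.
-/

open scoped RealInnerProductSpace

open Finset

theorem half_sum_weighted_norm_sq_le_inner {ι V : Type*} [NormedAddCommGroup V]
    [InnerProductSpace ℝ V] (s : Finset ι) (w : ι → ℝ) (u : ι → V) (a : ℝ) (x : V)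
    (hw : ∀ i ∈ s, w i ≤ 0) (hsum : a + ∑ i ∈ s, w i = 0) :
    (1 / 2) * (a * ‖x‖ ^ 2 + ∑ i ∈ s, w i * ‖u i‖ ^ 2) ≤ ⟪a • x + ∑ i ∈ s, w i • u i, x⟫ := by
  have ha : a = -∑ i ∈ s, w i := by linarith
  have hterm : ∀ i ∈ s,
      (1 / 2) * (w i * ‖u i‖ ^ 2 - w i * ‖x‖ ^ 2) ≤ w i * (⟪u i, x⟫ - ‖x‖ ^ 2) := by
    intro i hi
    have h := mul_nonpos_of_nonpos_of_nonneg (hw i hi) (sq_nonneg ‖u i - x‖)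
    rw [norm_sub_sq_real] at h
    linear_combination (1 / 2) * h
  calc (1 / 2) * (a * ‖x‖ ^ 2 + ∑ i ∈ s, w i * ‖u i‖ ^ 2)
      = ∑ i ∈ s, (1 / 2) * (w i * ‖u i‖ ^ 2 - w i * ‖x‖ ^ 2) := by
        rw [ha, ← mul_sum, sum_sub_distrib, ← sum_mul]
        ring
    _ ≤ ∑ i ∈ s, w i * (⟪u i, x⟫ - ‖x‖ ^ 2) := sum_le_sum hterm
    _ = ⟪a • x + ∑ i ∈ s, w i • u i, x⟫ := by
        rw [ha, inner_add_left, sum_inner, real_inner_smul_left, real_inner_self_eq_norm_sq]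
        simp only [real_inner_smul_left, mul_sub, sum_sub_distrib]
        rw [← sum_mul]
        ring

theorem half_sum_weighted_norm_sq_sub_le_inner {ι V : Type*} [NormedAddCommGroup V]
    [InnerProductSpace ℝ V] (s : Finset ι) (w : ι → ℝ) (u : ι → V) (a b : ℝ) (x y : V)
    (hw : ∀ i ∈ s, w i ≤ 0) (hb : 0 ≤ b) (hsum : a + ∑ i ∈ s, w i = b) :
    (1 / 2) * (a * ‖x‖ ^ 2 + ∑ i ∈ s, w i * ‖u i‖ ^ 2 - b * ‖y‖ ^ 2) ≤
      ⟪a • x + ∑ i ∈ s, w i • u i - b • y, x⟫ := by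
  have hw' : ∀ o ∈ s.insertNone, o.elim (-b) w ≤ 0 := by
    rintro (_ | i) hi
    · exact neg_nonpos.mpr hb
    · exact hw i (some_mem_insertNone.mp hi)
  have hsum' : a + ∑ o ∈ s.insertNone, o.elim (-b) w = 0 := by
    simp only [sum_insertNone, Option.elim_none, Option.elim_some]
    linarith
  have h := half_sum_weighted_norm_sq_le_inner s.insertNone (fun o => o.elim (-b) w)
    (fun o => o.elim y u) a x hw' hsum'
  simp only [sum_insertNone, Option.elim_none, Option.elim_some, neg_smul, neg_mul] at h
  convert h using 2 <;> abel

theorem sum_Ico_sub_succ {G : Type*} [AddCommGroup G] (f : ℕ → G) {m n : ℕ} (h : m ≤ n) :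
    ∑ i ∈ Ico m n, (f i - f (i + 1)) = f m - f n := by
  rw [← neg_sub (f n), ← sum_Ico_sub f h, ← sum_neg_distrib]
  simp only [neg_sub]

/-- Discrete positivity of the L2-1_σ operator: if `0 < c_1 ≤ c_2 ≤ … ≤ c_n` and
`D = c_n u^n + Σ_{j=1}^{n-1} (c_j - c_{j+1}) u^j - c_1 u^0`, then
`⟨D, u^n⟩ ≥ (1/2)[c_n ‖u^n‖² + Σ_{j=1}^{n-1} (c_j - c_{j+1}) ‖u^j‖² - c_1 ‖u^0‖²]`. -/
theorem stmt7 (V : Type*) [NormedAddCommGroup V] [InnerProductSpace ℝ V]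
    (n : ℕ) (hn : 1 ≤ n) (u : ℕ → V) (c : ℕ → ℝ)
    (hc1 : 0 < c 1) (hmono : ∀ j : ℕ, 1 ≤ j → j ≤ n - 1 → c j ≤ c (j + 1)) :
    ⟪c n • u n + (∑ j ∈ Finset.Icc 1 (n - 1), (c j - c (j + 1)) • u j) - c 1 • u 0, u n⟫ ≥
      (1 / 2) * (c n * ‖u n‖ ^ 2 +
        (∑ j ∈ Finset.Icc 1 (n - 1), (c j - c (j + 1)) * ‖u j‖ ^ 2) - c 1 * ‖u 0‖ ^ 2) := by
  have hIcc : Icc 1 (n - 1) = Ico 1 n := by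
    rw [← Ico_add_one_right_eq_Icc, Nat.sub_add_cancel hn]
  have hw : ∀ j ∈ Icc 1 (n - 1), c j - c (j + 1) ≤ 0 := fun j hj =>
    sub_nonpos.mpr (hmono j (mem_Icc.mp hj).1 (mem_Icc.mp hj).2)
  have hsum : c n + ∑ j ∈ Icc 1 (n - 1), (c j - c (j + 1)) = c 1 := by
    rw [hIcc, sum_Ico_sub_succ c hn]
    ring
  exact half_sum_weighted_norm_sq_sub_le_inner _ _ u _ _ _ _ hw hc1.le hsum
end

section
/- Let u : [0,T] → ℝ be continuous on [0,T] and twice continuously differentiable on (0,T], satisfying |u'(t)| ≤ C₀ t^{α−1} and |u''(t)| ≤ C₀ t^{α−2} for all t ∈ (0,T]. On the graded mesh t_n = T(n/N)^r, define the extrapolated value ũ^{n−1,σ} = u(t_{n−1}) + (1−σ)(τ_n/τ_{n−1})(u(t_{n−1}) − u(t_{n−2})) for n ≥ 2. Then there exists a constant C, depending only on C₀, α, σ, r, T and independent of n and N, such that |ũ^{n−1,σ} − u(t_{n−σ})| ≤ C N^{−min{rα, 2}} for all 2 ≤ n ≤ N. -/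
/-!
For `n = 2` the stencil reaches `t₀ = 0`, where `u` is only Hölder continuous: integrating
`|u'| ≤ C₀ t^(α-1)` gives `|u y - u x| ≤ (C₀/α) (y^α - x^α)`, so the error is
`O(t₂^α) = O(N^(-rα))`.
For `n ≥ 3` the stencil stays away from `0` (`t_n ≤ 3^r t_{n-2}`), and expanding around `t_{n-1}`
the first-order terms cancel, leaving `O(t_{n-2}^(α-2) τ_n²)`. With `τ_n ≤ r t_n / n` (convexity of
`x ↦ x^r`) this is `O(t_n^α / n²) = O(T^α (n/N)^(rα) / n²)`, and `(n/N)^(rα) / n² ≤ N^(-min(rα,2))`.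
-/

open Set

theorem abs_sub_le_sub_of_abs_hasDerivAt_le {f f' g g' : ℝ → ℝ} {a b : ℝ}
    (hf : ContinuousOn f (Icc a b)) (hg : ContinuousOn g (Icc a b))
    (hf' : ∀ t ∈ Ioo a b, HasDerivAt f (f' t) t) (hg' : ∀ t ∈ Ioo a b, HasDerivAt g (g' t) t)
    (hfg : ∀ t ∈ Ioo a b, |f' t| ≤ g' t) {x y : ℝ} (hx : x ∈ Icc a b) (hy : y ∈ Icc a b)
    (hxy : x ≤ y) :
    |f y - f x| ≤ g y - g x := by
  have mono (ε : ℝ) (hε : |ε| = 1) : MonotoneOn (fun t => g t - ε * f t) (Icc a b) := by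
    refine monotoneOn_of_hasDerivWithinAt_nonneg (convex_Icc a b) (hg.sub (hf.const_smul ε))
      (fun t ht => ?_) (fun t ht => ?_) (f' := fun t => g' t - ε * f' t)
    · rw [interior_Icc] at ht
      exact ((hg' t ht).sub ((hf' t ht).const_mul ε)).hasDerivWithinAt
    · rw [interior_Icc] at ht
      have : |ε * f' t| ≤ g' t := by rw [abs_mul, hε, one_mul]; exact hfg t ht
      linarith [le_abs_self (ε * f' t)]
  have h₁ := mono 1 abs_one hx hy hxy
  have h₂ := mono (-1) (by simp) hx hy hxy
  simp only at h₁ h₂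
  rw [abs_le]
  constructor <;> linarith

theorem abs_sub_le_rpow_sub_rpow {u u' : ℝ → ℝ} {T α C₀ : ℝ} (hα : 0 < α)
    (hu : ContinuousOn u (Icc 0 T)) (hu' : ∀ t ∈ Ioc 0 T, HasDerivAt u (u' t) t)
    (hb : ∀ t ∈ Ioc 0 T, |u' t| ≤ C₀ * t ^ (α - 1)) {x y : ℝ} (hx : 0 ≤ x) (hxy : x ≤ y)
    (hy : y ≤ T) :
    |u y - u x| ≤ C₀ / α * (y ^ α - x ^ α) := by
  rw [mul_sub]
  refine abs_sub_le_sub_of_abs_hasDerivAt_le (g := fun t => C₀ / α * t ^ α)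
    (g' := fun t => C₀ * t ^ (α - 1)) hu
    (continuous_const.mul (Real.continuous_rpow_const hα.le)).continuousOn
    (fun t ht => hu' t (Ioo_subset_Ioc_self ht)) (fun t ht => ?_)
    (fun t ht => hb t (Ioo_subset_Ioc_self ht)) ⟨hx, hxy.trans hy⟩ ⟨hx.trans hxy, hy⟩ hxy
  have := (Real.hasDerivAt_rpow_const (p := α) (Or.inl ht.1.ne')).const_mul (C₀ / α)
  rwa [← mul_assoc, div_mul_cancel₀ _ hα.ne'] at this

theorem abs_sub_sub_mul_le_of_abs_deriv_le {f f' f'' : ℝ → ℝ} {a b M : ℝ}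
    (hf : ∀ t ∈ Icc a b, HasDerivAt f (f' t) t) (hf' : ∀ t ∈ Icc a b, HasDerivAt f' (f'' t) t)
    (hM : ∀ t ∈ Icc a b, |f'' t| ≤ M) {x y : ℝ} (hx : x ∈ Icc a b) (hy : y ∈ Icc a b) :
    |f y - f x - f' x * (y - x)| ≤ M * (y - x) ^ 2 := by
  have hsub : uIcc x y ⊆ Icc a b := uIcc_subset_Icc hx hy
  have hf'_bound : ∀ t ∈ uIcc x y, ‖f' t - f' x‖ ≤ M * |y - x| := fun t ht => by
    have := (convex_Icc a b).norm_image_sub_le_of_norm_hasDerivWithin_le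
      (fun s hs => (hf' s hs).hasDerivWithinAt) hM hx (hsub ht)
    exact this.trans (mul_le_mul_of_nonneg_left (abs_sub_left_of_mem_uIcc ht)
      ((abs_nonneg _).trans (hM x hx)))
  have := convex_uIcc x y |>.norm_image_sub_le_of_norm_hasDerivWithin_le
    (f := fun t => f t - t * f' x)
    (fun t ht => ((hf t (hsub ht)).sub (hasDerivAt_mul_const (f' x))).hasDerivWithinAt)
    hf'_bound left_mem_uIcc right_mem_uIcc
  rw [Real.norm_eq_abs, Real.norm_eq_abs, mul_assoc, abs_mul_abs_self, ← sq] at this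
  convert this using 2
  ring

/-- For consecutive nodes `t₀, t₁, t₂ = t_{n-2}, t_{n-1}, t_n` this is `ũ^{n-1,σ} - u(t_{n-σ})`. -/
noncomputable def extrapolationError (u : ℝ → ℝ) (σ t₀ t₁ t₂ : ℝ) : ℝ :=
  u t₁ + (1 - σ) * ((t₂ - t₁) / (t₁ - t₀)) * (u t₁ - u t₀) - u ((1 - σ) * t₂ + σ * t₁)

theorem abs_extrapolationError_le_of_abs_sub_le {u : ℝ → ℝ} {σ t₀ t₁ t₂ B : ℝ}
    (hσ₀ : 0 ≤ σ) (hσ₁ : σ ≤ 1) (h₀₁ : t₀ < t₁) (h₁₂ : t₁ ≤ t₂)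
    (hB : ∀ x ∈ Icc t₀ t₂, ∀ y ∈ Icc t₀ t₂, |u y - u x| ≤ B) :
    |extrapolationError u σ t₀ t₁ t₂| ≤ (t₂ - t₀) / (t₁ - t₀) * B := by
  have hρ : 0 ≤ (t₂ - t₁) / (t₁ - t₀) := div_nonneg (by linarith) (by linarith)
  have hB₀ : 0 ≤ B := (abs_nonneg _).trans (hB t₀ ⟨le_rfl, by linarith⟩ t₀ ⟨le_rfl, by linarith⟩)
  have h₀ : t₀ ∈ Icc t₀ t₂ := ⟨le_rfl, by linarith⟩
  have h₁ : t₁ ∈ Icc t₀ t₂ := ⟨h₀₁.le, h₁₂⟩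
  have hσ : (1 - σ) * t₂ + σ * t₁ ∈ Icc t₀ t₂ := ⟨by nlinarith, by nlinarith⟩
  have hratio : (t₂ - t₀) / (t₁ - t₀) = 1 + (t₂ - t₁) / (t₁ - t₀) := by
    field_simp [(sub_pos.2 h₀₁).ne']
    ring
  calc |extrapolationError u σ t₀ t₁ t₂|
      ≤ |u t₁ - u ((1 - σ) * t₂ + σ * t₁)| + (1 - σ) * ((t₂ - t₁) / (t₁ - t₀)) * |u t₁ - u t₀| := by
        rw [extrapolationError, add_sub_right_comm]
        refine (abs_add_le _ _).trans_eq ?_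
        rw [abs_mul, abs_of_nonneg (mul_nonneg (by linarith) hρ)]
    _ ≤ B + 1 * ((t₂ - t₁) / (t₁ - t₀)) * B := by
        gcongr
        · exact hB _ hσ _ h₁
        · linarith
        · exact hB _ h₀ _ h₁
    _ = (t₂ - t₀) / (t₁ - t₀) * B := by rw [hratio]; ring

theorem abs_extrapolationError_le_of_abs_deriv_le {u u' u'' : ℝ → ℝ} {σ t₀ t₁ t₂ M : ℝ}
    (hσ₀ : 0 ≤ σ) (hσ₁ : σ ≤ 1) (h₀₁ : t₀ < t₁) (hτ : t₁ - t₀ ≤ t₂ - t₁)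
    (hu' : ∀ t ∈ Icc t₀ t₂, HasDerivAt u (u' t) t)
    (hu'' : ∀ t ∈ Icc t₀ t₂, HasDerivAt u' (u'' t) t) (hM : ∀ t ∈ Icc t₀ t₂, |u'' t| ≤ M) :
    |extrapolationError u σ t₀ t₁ t₂| ≤ 2 * M * (t₂ - t₁) ^ 2 := by
  set tσ := (1 - σ) * t₂ + σ * t₁
  set ρ := (t₂ - t₁) / (t₁ - t₀)
  have hτ₀ : 0 < t₁ - t₀ := sub_pos.2 h₀₁
  have hτ₁ : 0 < t₂ - t₁ := hτ₀.trans_le hτ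
  have hρ : ρ * (t₁ - t₀) = t₂ - t₁ := div_mul_cancel₀ _ hτ₀.ne'
  have hρ₀ : 0 ≤ ρ := div_nonneg hτ₁.le hτ₀.le
  have htσ : tσ - t₁ = (1 - σ) * (t₂ - t₁) := by ring
  have h₀ : t₀ ∈ Icc t₀ t₂ := ⟨le_rfl, by linarith⟩
  have h₁ : t₁ ∈ Icc t₀ t₂ := ⟨h₀₁.le, by linarith⟩
  have hσ : tσ ∈ Icc t₀ t₂ := ⟨by nlinarith, by nlinarith⟩
  have hM₀ : 0 ≤ M := (abs_nonneg _).trans (hM t₀ h₀)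
  have hR₀ := abs_sub_sub_mul_le_of_abs_deriv_le hu' hu'' hM h₁ h₀
  have hRσ := abs_sub_sub_mul_le_of_abs_deriv_le hu' hu'' hM h₁ hσ
  -- the first-order Taylor terms cancel since `(1 - σ) ρ (t₁ - t₀) = tσ - t₁`
  have hE : extrapolationError u σ t₀ t₁ t₂ =
      -((1 - σ) * ρ * (u t₀ - u t₁ - u' t₁ * (t₀ - t₁))) - (u tσ - u t₁ - u' t₁ * (tσ - t₁)) := by
    rw [extrapolationError]
    linear_combination (1 - σ) * u' t₁ * hρ
  calc |extrapolationError u σ t₀ t₁ t₂|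
      ≤ (1 - σ) * ρ * (M * (t₀ - t₁) ^ 2) + M * (tσ - t₁) ^ 2 := by
        rw [hE]
        refine (abs_sub _ _).trans (add_le_add ?_ hRσ)
        rw [abs_neg, abs_mul, abs_of_nonneg (mul_nonneg (by linarith) hρ₀)]
        exact mul_le_mul_of_nonneg_left hR₀ (mul_nonneg (by linarith) hρ₀)
    _ = (1 - σ) * (M * ((t₂ - t₁) * (t₁ - t₀))) + (1 - σ) ^ 2 * (M * (t₂ - t₁) ^ 2) := by
        rw [htσ]
        linear_combination (1 - σ) * M * (t₁ - t₀) * hρ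
    _ ≤ M * (t₂ - t₁) ^ 2 + M * (t₂ - t₁) ^ 2 := by
        gcongr ?_ + ?_
        · refine (mul_le_of_le_one_left (by positivity) (by linarith)).trans ?_
          rw [sq]
          gcongr
        · exact mul_le_of_le_one_left (by positivity) (by nlinarith)
    _ = 2 * M * (t₂ - t₁) ^ 2 := by ring

section Mesh

variable {T r : ℝ} {N : ℕ}

theorem meshT_zero (hr : r ≠ 0) : meshT T r N 0 = 0 := by
  simp [meshT, Real.zero_rpow hr]

theorem meshT_nonneg (hT : 0 ≤ T) (n : ℕ) : 0 ≤ meshT T r N n := by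
  unfold meshT
  positivity

theorem meshT_le (hT : 0 ≤ T) (hr : 0 ≤ r) {n : ℕ} (hn : n ≤ N) : meshT T r N n ≤ T :=
  mul_le_of_le_one_right hT <| Real.rpow_le_one (by positivity)
    (div_le_one_of_le₀ (by exact_mod_cast hn) (Nat.cast_nonneg N)) hr

theorem meshT_lt_meshT (hT : 0 < T) (hr : 0 < r) (hN : 0 < N) {m n : ℕ} (hmn : m < n) :
    meshT T r N m < meshT T r N n := by
  unfold meshT
  gcongr

theorem meshT_two : meshT T r N 2 = 2 ^ r * meshT T r N 1 := by
  simp only [meshT, Nat.cast_ofNat, Nat.cast_one]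
  rw [show (2 : ℝ) / N = 2 * (1 / N) by ring, Real.mul_rpow zero_le_two (by positivity)]
  ring

theorem meshT_succ_sub_meshT_le_add_two_sub (hT : 0 ≤ T) (hr : 1 ≤ r) (m : ℕ) :
    meshT T r N (m + 1) - meshT T r N m ≤ meshT T r N (m + 2) - meshT T r N (m + 1) := by
  have hmid : ((m + 1 : ℕ) : ℝ) / N = 1 / 2 * ((m : ℕ) / N) + 1 / 2 * ((m + 2 : ℕ) / N) := by
    push_cast; ring
  have hconv := (convexOn_rpow hr).2 (mem_Ici.2 (by positivity : (0 : ℝ) ≤ (m : ℕ) / N))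
    (mem_Ici.2 (by positivity : (0 : ℝ) ≤ (m + 2 : ℕ) / N)) (by norm_num : (0 : ℝ) ≤ 1 / 2)
    (by norm_num : (0 : ℝ) ≤ 1 / 2) (by norm_num)
  simp only [smul_eq_mul, ← hmid] at hconv
  unfold meshT
  nlinarith [mul_le_mul_of_nonneg_left hconv hT]

theorem meshT_succ_sub_meshT_le (hT : 0 ≤ T) (hr : 1 ≤ r) (k : ℕ) :
    meshT T r N (k + 1) - meshT T r N k ≤ r / (k + 1) * meshT T r N (k + 1) := by
  have hk : (0 : ℝ) < k + 1 := by positivity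
  -- Bernoulli's inequality `(1 - 1/(k+1))^r ≥ 1 - r/(k+1)`
  have hbern := one_add_mul_self_le_rpow_one_add (s := -(1 / (k + 1))) (by
    rw [neg_le_neg_iff, div_le_one hk]; linarith [(Nat.cast_nonneg k : (0 : ℝ) ≤ k)]) hr
  have hsplit : ((k : ℕ) : ℝ) / N = ((k + 1 : ℕ) : ℝ) / N * (1 + -(1 / (k + 1))) := by
    push_cast; field_simp; ring
  unfold meshT
  rw [hsplit, Real.mul_rpow (by positivity) (by field_simp; linarith)]
  have hneg : r * -(1 / (k + 1)) = -(r / (k + 1)) := by ring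
  calc T * (((k + 1 : ℕ) : ℝ) / N) ^ r
        - T * ((((k + 1 : ℕ) : ℝ) / N) ^ r * (1 + -(1 / (k + 1))) ^ r)
      = T * (((k + 1 : ℕ) : ℝ) / N) ^ r * (1 - (1 + -(1 / (k + 1))) ^ r) := by ring
    _ ≤ T * (((k + 1 : ℕ) : ℝ) / N) ^ r * (r / (k + 1)) := by gcongr; linarith
    _ = r / (k + 1) * (T * (((k + 1 : ℕ) : ℝ) / N) ^ r) := by push_cast; ring

theorem meshT_add_two_le (hT : 0 ≤ T) (hr : 0 ≤ r) {m : ℕ} (hm : 1 ≤ m) :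
    meshT T r N (m + 2) ≤ 3 ^ r * meshT T r N m := by
  unfold meshT
  rw [mul_left_comm, ← Real.mul_rpow zero_le_three (by positivity)]
  gcongr
  rw [mul_div_assoc']
  gcongr
  push_cast
  linarith [(Nat.one_le_cast.2 hm : (1 : ℝ) ≤ m)]

theorem meshT_rpow (hT : 0 ≤ T) (α : ℝ) (n : ℕ) :
    meshT T r N n ^ α = T ^ α * ((n : ℝ) / N) ^ (r * α) := by
  rw [meshT, Real.mul_rpow hT (by positivity), ← Real.rpow_mul (by positivity)]

end Mesh

theorem rpow_div_div_sq_le {x y β : ℝ} (hx : 1 ≤ x) (hxy : x ≤ y) :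
    (x / y) ^ β / x ^ 2 ≤ y ^ (-min β 2) := by
  have hx₀ : 0 < x := zero_lt_one.trans_le hx
  have hy₀ : 0 < y := hx₀.trans_le hxy
  rcases le_total β 2 with hβ2 | hβ2
  · calc (x / y) ^ β / x ^ 2 = x ^ β / x ^ (2 : ℝ) * y ^ (-β) := by
          rw [Real.div_rpow hx₀.le hy₀.le, Real.rpow_neg hy₀.le, Real.rpow_two]; ring
      _ ≤ 1 * y ^ (-β) := by
          gcongr
          exact div_le_one_of_le₀ (Real.rpow_le_rpow_of_exponent_le hx hβ2) (by positivity)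
      _ = y ^ (-min β 2) := by rw [one_mul, min_eq_left hβ2]
  · rw [min_eq_right hβ2, Real.rpow_neg hy₀.le, Real.rpow_two]
    calc (x / y) ^ β / x ^ 2 ≤ (x / y) ^ (2 : ℝ) / x ^ 2 := by
          refine div_le_div_of_nonneg_right ?_ (by positivity)
          exact Real.rpow_le_rpow_of_exponent_ge (by positivity) (div_le_one_of_le₀ hxy hy₀.le) hβ2
      _ = (y ^ 2)⁻¹ := by rw [Real.rpow_two]; field_simp

theorem extrapolationError_meshT_eq (u : ℝ → ℝ) (T r σ : ℝ) (N m : ℕ) :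
    extrapolationError u σ (meshT T r N m) (meshT T r N (m + 1)) (meshT T r N (m + 2)) =
      u (meshT T r N (m + 2 - 1)) + (1 - σ) * (meshTau T r N (m + 2) / meshTau T r N (m + 2 - 1)) *
        (u (meshT T r N (m + 2 - 1)) - u (meshT T r N (m + 2 - 2))) -
        u (meshTSig T r σ N (m + 2)) := by
  simp [extrapolationError, meshTau, meshTSig]

theorem abs_extrapolationError_meshT_zero_le {T r α σ C₀ : ℝ} {u u' : ℝ → ℝ} {N : ℕ}
    (hT : 0 < T) (hr : 0 < r) (hα : 0 < α) (hσ₀ : 0 ≤ σ) (hσ₁ : σ ≤ 1) (hC₀ : 0 ≤ C₀)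
    (hN : 2 ≤ N) (hu : ContinuousOn u (Icc 0 T)) (hu' : ∀ t ∈ Ioc 0 T, HasDerivAt u (u' t) t)
    (hb : ∀ t ∈ Ioc 0 T, |u' t| ≤ C₀ * t ^ (α - 1)) :
    |extrapolationError u σ (meshT T r N 0) (meshT T r N 1) (meshT T r N 2)| ≤
      2 ^ r * (C₀ / α) * meshT T r N 2 ^ α := by
  have hN₀ : 0 < N := by omega
  have h₀₁ := meshT_lt_meshT (N := N) hT hr hN₀ zero_lt_one
  have h₁₂ := meshT_lt_meshT (N := N) hT hr hN₀ one_lt_two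
  have h₂ := meshT_le hT.le hr.le hN
  rw [meshT_zero hr.ne'] at h₀₁ ⊢
  have hosc : ∀ x ∈ Icc 0 (meshT T r N 2), ∀ y ∈ Icc 0 (meshT T r N 2),
      |u y - u x| ≤ C₀ / α * meshT T r N 2 ^ α := by
    intro x hx y hy
    wlog hxy : x ≤ y generalizing x y
    · rw [abs_sub_comm]
      exact this y hy x hx (le_of_not_ge hxy)
    calc |u y - u x| ≤ C₀ / α * (y ^ α - x ^ α) :=
          abs_sub_le_rpow_sub_rpow hα hu hu' hb hx.1 hxy (hy.2.trans h₂)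
      _ ≤ C₀ / α * meshT T r N 2 ^ α := by
          gcongr
          linarith [Real.rpow_nonneg hx.1 α, Real.rpow_le_rpow hy.1 hy.2 hα.le]
  have hratio : meshT T r N 2 / meshT T r N 1 = 2 ^ r := by
    rw [meshT_two, mul_div_assoc, div_self h₀₁.ne', mul_one]
  calc _ ≤ (meshT T r N 2 - 0) / (meshT T r N 1 - 0) * (C₀ / α * meshT T r N 2 ^ α) :=
        abs_extrapolationError_le_of_abs_sub_le hσ₀ hσ₁ h₀₁ h₁₂.le hosc
    _ = _ := by rw [sub_zero, sub_zero, hratio, mul_assoc]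

theorem abs_extrapolationError_meshT_le_of_one_le {T r α σ C₀ : ℝ} {u u' u'' : ℝ → ℝ} {N m : ℕ}
    (hT : 0 < T) (hr : 1 ≤ r) (hα : α ≤ 2) (hσ₀ : 0 ≤ σ) (hσ₁ : σ ≤ 1) (hC₀ : 0 ≤ C₀)
    (hm : 1 ≤ m) (hmN : m + 2 ≤ N) (hu' : ∀ t ∈ Ioc 0 T, HasDerivAt u (u' t) t)
    (hu'' : ∀ t ∈ Ioc 0 T, HasDerivAt u' (u'' t) t)
    (hb : ∀ t ∈ Ioc 0 T, |u'' t| ≤ C₀ * t ^ (α - 2)) :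
    |extrapolationError u σ (meshT T r N m) (meshT T r N (m + 1)) (meshT T r N (m + 2))| ≤
      2 * 3 ^ (r * (2 - α)) * r ^ 2 * C₀ * (meshT T r N (m + 2) ^ α / ((m : ℝ) + 2) ^ 2) := by
  have hN₀ : 0 < N := by omega
  have hr₀ : 0 < r := by linarith
  have h₀₁ := meshT_lt_meshT (N := N) hT hr₀ hN₀ (lt_add_one m)
  set t₀ := meshT T r N m
  set t₂ := meshT T r N (m + 2)
  have h₁₂ := meshT_lt_meshT (N := N) hT hr₀ hN₀ (by omega : m + 1 < m + 2)
  have ht₀ : 0 < t₀ := by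
    simpa [meshT_zero hr₀.ne'] using meshT_lt_meshT (N := N) hT hr₀ hN₀ (by omega : 0 < m)
  have ht₂ : 0 < t₂ := ht₀.trans (h₀₁.trans h₁₂)
  have hsub : Icc t₀ t₂ ⊆ Ioc 0 T := fun t ht =>
    ⟨ht₀.trans_le ht.1, ht.2.trans (meshT_le hT.le hr₀.le hmN)⟩
  have hM : ∀ t ∈ Icc t₀ t₂, |u'' t| ≤ C₀ * t₀ ^ (α - 2) := fun t ht =>
    (hb t (hsub ht)).trans
      (mul_le_mul_of_nonneg_left (Real.rpow_le_rpow_of_nonpos ht₀ ht.1 (by linarith)) hC₀)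
  have hE := abs_extrapolationError_le_of_abs_deriv_le hσ₀ hσ₁ h₀₁
    (meshT_succ_sub_meshT_le_add_two_sub hT.le hr m) (fun t ht => hu' t (hsub ht))
    (fun t ht => hu'' t (hsub ht)) hM
  have hτ : t₂ - meshT T r N (m + 1) ≤ r / ((m : ℝ) + 2) * t₂ := by
    have := meshT_succ_sub_meshT_le (N := N) hT.le hr (m + 1)
    rwa [show ((m + 1 : ℕ) : ℝ) + 1 = m + 2 by push_cast; ring] at this
  have ht₀₂ : t₀ ^ (α - 2) ≤ (t₂ / 3 ^ r) ^ (α - 2) :=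
    Real.rpow_le_rpow_of_nonpos (by positivity)
      (div_le_of_le_mul₀ (by positivity) ht₀.le
        ((meshT_add_two_le hT.le hr₀.le hm).trans_eq (mul_comm _ _))) (by linarith)
  have h3 : ((3 : ℝ) ^ r) ^ (α - 2) * 3 ^ (r * (2 - α)) = 1 := by
    rw [← Real.rpow_mul zero_le_three, ← Real.rpow_add zero_lt_three]
    ring_nf
    exact Real.rpow_zero 3
  have hrpow : (t₂ / 3 ^ r) ^ (α - 2) = 3 ^ (r * (2 - α)) * (t₂ ^ α / t₂ ^ 2) := by
    rw [Real.div_rpow ht₂.le (by positivity), Real.rpow_sub ht₂, Real.rpow_two,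
      div_eq_iff (by positivity)]
    linear_combination -(t₂ ^ α / t₂ ^ 2) * h3
  calc _ ≤ 2 * (C₀ * t₀ ^ (α - 2)) * (t₂ - meshT T r N (m + 1)) ^ 2 := hE
    _ ≤ 2 * (C₀ * (t₂ / 3 ^ r) ^ (α - 2)) * (r / ((m : ℝ) + 2) * t₂) ^ 2 := by
        gcongr
    _ = _ := by
        rw [hrpow]
        field_simp

theorem abs_extrapolationError_meshT_le {T r α σ C₀ : ℝ} {u u' u'' : ℝ → ℝ} {N m : ℕ}
    (hT : 0 < T) (hr : 1 ≤ r) (hα₀ : 0 < α) (hα₂ : α ≤ 2) (hσ₀ : 0 ≤ σ) (hσ₁ : σ ≤ 1)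
    (hC₀ : 0 ≤ C₀) (hmN : m + 2 ≤ N) (hu : ContinuousOn u (Icc 0 T))
    (hu' : ∀ t ∈ Ioc 0 T, HasDerivAt u (u' t) t) (hu'' : ∀ t ∈ Ioc 0 T, HasDerivAt u' (u'' t) t)
    (hb₁ : ∀ t ∈ Ioc 0 T, |u' t| ≤ C₀ * t ^ (α - 1))
    (hb₂ : ∀ t ∈ Ioc 0 T, |u'' t| ≤ C₀ * t ^ (α - 2)) :
    |extrapolationError u σ (meshT T r N m) (meshT T r N (m + 1)) (meshT T r N (m + 2))| ≤
      (4 * 2 ^ r * (C₀ / α) + 2 * 3 ^ (r * (2 - α)) * r ^ 2 * C₀) *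
        (meshT T r N (m + 2) ^ α / ((m : ℝ) + 2) ^ 2) := by
  have hmesh : 0 ≤ meshT T r N (m + 2) ^ α / ((m : ℝ) + 2) ^ 2 := by
    have := meshT_nonneg (r := r) (N := N) hT.le (m + 2)
    positivity
  rcases Nat.eq_zero_or_pos m with rfl | hm
  · calc _ ≤ 2 ^ r * (C₀ / α) * meshT T r N 2 ^ α :=
          abs_extrapolationError_meshT_zero_le hT (by linarith) hα₀ hσ₀ hσ₁ hC₀ hmN hu hu' hb₁
      _ = 4 * 2 ^ r * (C₀ / α) * (meshT T r N 2 ^ α / (((0 : ℕ) : ℝ) + 2) ^ 2) := by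
          norm_num; ring
      _ ≤ _ := mul_le_mul_of_nonneg_right (le_add_of_nonneg_right (by positivity)) hmesh
  · exact (abs_extrapolationError_meshT_le_of_one_le hT hr hα₂ hσ₀ hσ₁ hC₀ hm hmN hu' hu''
      hb₂).trans (mul_le_mul_of_nonneg_right (le_add_of_nonneg_left (by positivity)) hmesh)

theorem stmt8_general (T r α σ C₀ : ℝ) (hT : 0 < T) (hr : 1 ≤ r) (hα0 : 0 < α) (hα1 : α < 1)
    (hσ0 : 0 < σ) (hσ1 : σ < 1) (hC₀ : 0 < C₀)
    (u u' u'' : ℝ → ℝ)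
    (hu : ContinuousOn u (Set.Icc 0 T))
    (hu' : ∀ t ∈ Set.Ioc (0 : ℝ) T, HasDerivAt u (u' t) t)
    (hu'' : ∀ t ∈ Set.Ioc (0 : ℝ) T, HasDerivAt u' (u'' t) t)
    (hb1 : ∀ t ∈ Set.Ioc (0 : ℝ) T, |u' t| ≤ C₀ * t ^ (α - 1))
    (hb2 : ∀ t ∈ Set.Ioc (0 : ℝ) T, |u'' t| ≤ C₀ * t ^ (α - 2)) :
    ∃ C : ℝ, 0 < C ∧ ∀ N : ℕ, 2 ≤ N → ∀ n : ℕ, 2 ≤ n → n ≤ N →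
      |u (meshT T r N (n - 1)) +
          (1 - σ) * (meshTau T r N n / meshTau T r N (n - 1)) *
            (u (meshT T r N (n - 1)) - u (meshT T r N (n - 2))) -
        u (meshTSig T r σ N n)| ≤ C * (N : ℝ) ^ (-min (r * α) 2) := by
  set K := 4 * 2 ^ r * (C₀ / α) + 2 * 3 ^ (r * (2 - α)) * r ^ 2 * C₀
  refine ⟨K * T ^ α, by positivity, fun N _ n hn hnN => ?_⟩
  obtain ⟨m, rfl⟩ := Nat.exists_eq_add_of_le' hn
  rw [← extrapolationError_meshT_eq]
  calc _ ≤ K * (meshT T r N (m + 2) ^ α / ((m : ℝ) + 2) ^ 2) :=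
        abs_extrapolationError_meshT_le hT hr hα0 (by linarith) hσ0.le hσ1.le hC₀.le hnN hu hu'
          hu'' hb1 hb2
    _ = K * T ^ α * ((((m : ℝ) + 2) / N) ^ (r * α) / ((m : ℝ) + 2) ^ 2) := by
        rw [meshT_rpow hT.le]; push_cast; ring
    _ ≤ K * T ^ α * (N : ℝ) ^ (-min (r * α) 2) := by
        gcongr
        exact rpow_div_div_sq_le (by linarith [(Nat.cast_nonneg m : (0 : ℝ) ≤ m)])
          (by exact_mod_cast hnN)

/-- Linearization error of the extrapolation
`ũ^{n-1,σ} = u(t_{n-1}) + (1-σ)(τ_n/τ_{n-1})(u(t_{n-1}) - u(t_{n-2}))`: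
for `u` continuous on `[0,T]`, twice continuously differentiable on `(0,T]` with
`|u'(t)| ≤ C₀ t^{α-1}` and `|u''(t)| ≤ C₀ t^{α-2}`, one has
`|ũ^{n-1,σ} - u(t_{n-σ})| ≤ C N^{-min{rα,2}}` for `2 ≤ n ≤ N`, with `C` independent
of `n` and `N`. -/
theorem stmt8 (T r α σ C₀ : ℝ) (hT : 0 < T) (hr : 1 ≤ r) (hα0 : 0 < α) (hα1 : α < 1)
    (hσ0 : 0 < σ) (hσ1 : σ < 1) (hC₀ : 0 < C₀)
    (u u' u'' : ℝ → ℝ)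
    (hu : ContinuousOn u (Set.Icc 0 T))
    (hu' : ∀ t ∈ Set.Ioc (0 : ℝ) T, HasDerivAt u (u' t) t)
    (hu'' : ∀ t ∈ Set.Ioc (0 : ℝ) T, HasDerivAt u' (u'' t) t)
    (hu''c : ContinuousOn u'' (Set.Ioc 0 T))
    (hb1 : ∀ t ∈ Set.Ioc (0 : ℝ) T, |u' t| ≤ C₀ * t ^ (α - 1))
    (hb2 : ∀ t ∈ Set.Ioc (0 : ℝ) T, |u'' t| ≤ C₀ * t ^ (α - 2)) :
    ∃ C : ℝ, 0 < C ∧ ∀ N : ℕ, 2 ≤ N → ∀ n : ℕ, 2 ≤ n → n ≤ N →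
      |u (meshT T r N (n - 1)) +
          (1 - σ) * (meshTau T r N n / meshTau T r N (n - 1)) *
            (u (meshT T r N (n - 1)) - u (meshT T r N (n - 2))) -
        u (meshTSig T r σ N n)| ≤ C * (N : ℝ) ^ (-min (r * α) 2) :=
  stmt8_general T r α σ C₀ hT hr hα0 hα1 hσ0 hσ1 hC₀ u u' u'' hu hu' hu'' hb1 hb2
end

section
/- Let E be a real Banach space and let f : [0, t₁] → E be continuous on [0, t₁] and differentiable on (0, t₁) with ‖f'(s)‖ ≤ C₀ s^{α−1} for all s ∈ (0, t₁), where 0 < α < 1. Then the right-rectangle quadrature error satisfies ‖ t_{1−σ} f(t_{1−σ}) − ∫_0^{t_{1−σ}} f(s) ds ‖ ≤ C₀ t₁^{1+α} = C₀ T^{1+α} N^{−r(1+α)}, where t₁ = T N^{−r} and t_{1−σ} = (1−σ) t₁ for σ ∈ (0,1). -/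
/-!
The error is `∫₀^τ (f τ - f s) ds`. On the first mesh interval `f` is only Hölder continuous:
comparing `f'` with the derivative of `C₀ s^α / α` gives `‖f τ - f s‖ ≤ C₀ (τ^α - s^α) / α`, and
integrating this over `s ∈ [0, τ]` bounds the error by `C₀ τ^{1+α} / (1+α) ≤ C₀ t₁^{1+α}`.
-/

open MeasureTheory Set

section

variable {E : Type*} [NormedAddCommGroup E] [NormedSpace ℝ E]

theorem norm_sub_le_of_norm_deriv_le_rpow {f f' : ℝ → E} {a b C α : ℝ} (ha : 0 < a) (hab : a ≤ b)
    (hα : α ≠ 0) (hf : ContinuousOn f (Icc a b)) (hf' : ∀ x ∈ Ico a b, HasDerivAt f (f' x) x)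
    (hbound : ∀ x ∈ Ico a b, ‖f' x‖ ≤ C * x ^ (α - 1)) :
    ‖f b - f a‖ ≤ C / α * (b ^ α - a ^ α) := by
  have hB' : ∀ x ∈ Ico a b,
      HasDerivAt (fun u : ℝ => C / α * (u ^ α - a ^ α)) (C * x ^ (α - 1)) x := by
    intro x hx
    have hx0 : x ≠ 0 := (ha.trans_le hx.1).ne'
    exact (((Real.hasDerivAt_rpow_const (Or.inl hx0)).sub_const (a ^ α)).const_mul
      (C / α)).congr_deriv (by rw [← mul_assoc, div_mul_cancel₀ _ hα])
  have hB : ContinuousOn (fun u : ℝ => C / α * (u ^ α - a ^ α)) (Icc a b) := by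
    refine continuousOn_const.mul (ContinuousOn.sub (fun u hu => ?_) continuousOn_const)
    exact (Real.continuousAt_rpow_const u α (Or.inl (ha.trans_le hu.1).ne')).continuousWithinAt
  exact image_norm_le_of_norm_deriv_right_le_deriv_boundary' (f := fun x => f x - f a)
    (hf.sub continuousOn_const) (fun x hx => ((hf' x hx).sub_const (f a)).hasDerivWithinAt)
    (by simp) hB (fun x hx => (hB' x hx).hasDerivWithinAt) hbound (right_mem_Icc.2 hab)

theorem integral_rpow_sub_rpow {τ α : ℝ} (hτ : 0 ≤ τ) (hα : -1 < α) :
    ∫ s in (0 : ℝ)..τ, (τ ^ α - s ^ α) = α / (α + 1) * τ ^ (α + 1) := by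
  have hα1 : α + 1 ≠ 0 := by linarith
  rw [intervalIntegral.integral_sub intervalIntegrable_const
      (intervalIntegral.intervalIntegrable_rpow' hα),
    intervalIntegral.integral_const, integral_rpow (Or.inl hα), Real.zero_rpow hα1,
    Real.rpow_add' hτ hα1, Real.rpow_one, smul_eq_mul]
  field_simp
  ring

variable [CompleteSpace E]

theorem norm_smul_sub_intervalIntegral_le_of_norm_deriv_le_rpow {f f' : ℝ → E} {τ C α : ℝ}
    (hτ : 0 < τ) (hα : 0 < α) (hf : ContinuousOn f (Icc 0 τ))
    (hf' : ∀ s ∈ Ioo 0 τ, HasDerivAt f (f' s) s)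
    (hbound : ∀ s ∈ Ioo 0 τ, ‖f' s‖ ≤ C * s ^ (α - 1)) :
    ‖τ • f τ - ∫ s in (0 : ℝ)..τ, f s‖ ≤ C * τ ^ (1 + α) / (1 + α) := by
  have hfint : IntervalIntegrable f volume 0 τ :=
    (hf.mono (uIcc_of_le hτ.le).subset).intervalIntegrable
  have hHolder : ∀ s ∈ Ioc 0 τ, ‖f τ - f s‖ ≤ C / α * (τ ^ α - s ^ α) := fun s hs =>
    norm_sub_le_of_norm_deriv_le_rpow hs.1 hs.2 hα.ne' (hf.mono (Icc_subset_Icc hs.1.le le_rfl))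
      (fun x hx => hf' x ⟨hs.1.trans_le hx.1, hx.2⟩)
      (fun x hx => hbound x ⟨hs.1.trans_le hx.1, hx.2⟩)
  have herror : τ • f τ - ∫ s in (0 : ℝ)..τ, f s = ∫ s in (0 : ℝ)..τ, (f τ - f s) := by
    rw [intervalIntegral.integral_sub intervalIntegrable_const hfint,
      intervalIntegral.integral_const, sub_zero]
  calc ‖τ • f τ - ∫ s in (0 : ℝ)..τ, f s‖
      ≤ ∫ s in (0 : ℝ)..τ, C / α * (τ ^ α - s ^ α) := by
        rw [herror]
        refine intervalIntegral.norm_integral_le_of_norm_le hτ.le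
          (Filter.Eventually.of_forall hHolder) ?_
        exact (intervalIntegrable_const.sub
          (intervalIntegral.intervalIntegrable_rpow' (by linarith))).const_mul _
    _ = C * τ ^ (1 + α) / (1 + α) := by
        rw [intervalIntegral.integral_const_mul, integral_rpow_sub_rpow hτ.le (by linarith),
          add_comm α 1]
        field_simp

end

theorem stmt11_general (E : Type*) [NormedAddCommGroup E] [NormedSpace ℝ E] [CompleteSpace E]
    (T r α σ C₀ : ℝ) (hT : 0 < T) (hα0 : 0 < α)
    (hσ0 : 0 < σ) (hσ1 : σ < 1) (hC₀ : 0 < C₀)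
    (N : ℕ) (hN : 2 ≤ N)
    (t₁ : ℝ) (ht₁ : t₁ = T * (N : ℝ) ^ (-r))
    (f f' : ℝ → E)
    (hf : ContinuousOn f (Set.Icc 0 t₁))
    (hf' : ∀ s ∈ Set.Ioo (0 : ℝ) t₁, HasDerivAt f (f' s) s)
    (hb : ∀ s ∈ Set.Ioo (0 : ℝ) t₁, ‖f' s‖ ≤ C₀ * s ^ (α - 1)) :
    ‖((1 - σ) * t₁) • f ((1 - σ) * t₁) - ∫ s in (0 : ℝ)..((1 - σ) * t₁), f s‖ ≤
        C₀ * t₁ ^ (1 + α) ∧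
      C₀ * t₁ ^ (1 + α) = C₀ * T ^ (1 + α) * (N : ℝ) ^ (-(r * (1 + α))) := by
  have hN0 : (0 : ℝ) < N := by positivity
  have ht₁pos : 0 < t₁ := ht₁ ▸ mul_pos hT (Real.rpow_pos_of_pos hN0 _)
  set τ := (1 - σ) * t₁
  have hτpos : 0 < τ := mul_pos (by linarith) ht₁pos
  have hτt₁ : τ ≤ t₁ := mul_le_of_le_one_left ht₁pos.le (by linarith)
  have hIoo : Ioo 0 τ ⊆ Ioo 0 t₁ := Ioo_subset_Ioo_right hτt₁
  refine ⟨?_, ?_⟩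
  · calc _ ≤ C₀ * τ ^ (1 + α) / (1 + α) :=
          norm_smul_sub_intervalIntegral_le_of_norm_deriv_le_rpow hτpos hα0
            (hf.mono (Icc_subset_Icc_right hτt₁)) (fun s hs => hf' s (hIoo hs))
            (fun s hs => hb s (hIoo hs))
      _ ≤ C₀ * τ ^ (1 + α) := div_le_self (by positivity) (by linarith)
      _ ≤ C₀ * t₁ ^ (1 + α) := by gcongr
  · rw [ht₁, Real.mul_rpow hT.le (Real.rpow_nonneg hN0.le _), ← Real.rpow_mul hN0.le, neg_mul,
      mul_assoc]

/-- Right-rectangle quadrature error on the first graded-mesh interval: for `f`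
continuous on `[0,t₁]`, differentiable on `(0,t₁)` with `‖f'(s)‖ ≤ C₀ s^{α-1}`,
one has `‖t_{1-σ} f(t_{1-σ}) - ∫_0^{t_{1-σ}} f(s) ds‖ ≤ C₀ t₁^{1+α}
= C₀ T^{1+α} N^{-r(1+α)}`, where `t₁ = T N^{-r}` and `t_{1-σ} = (1-σ) t₁`. -/
theorem stmt11 (E : Type*) [NormedAddCommGroup E] [NormedSpace ℝ E] [CompleteSpace E]
    (T r α σ C₀ : ℝ) (hT : 0 < T) (hr : 1 ≤ r) (hα0 : 0 < α) (hα1 : α < 1)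
    (hσ0 : 0 < σ) (hσ1 : σ < 1) (hC₀ : 0 < C₀)
    (N : ℕ) (hN : 2 ≤ N)
    (t₁ : ℝ) (ht₁ : t₁ = T * (N : ℝ) ^ (-r))
    (f f' : ℝ → E)
    (hf : ContinuousOn f (Set.Icc 0 t₁))
    (hf' : ∀ s ∈ Set.Ioo (0 : ℝ) t₁, HasDerivAt f (f' s) s)
    (hb : ∀ s ∈ Set.Ioo (0 : ℝ) t₁, ‖f' s‖ ≤ C₀ * s ^ (α - 1)) :
    ‖((1 - σ) * t₁) • f ((1 - σ) * t₁) - ∫ s in (0 : ℝ)..((1 - σ) * t₁), f s‖ ≤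
        C₀ * t₁ ^ (1 + α) ∧
      C₀ * t₁ ^ (1 + α) = C₀ * T ^ (1 + α) * (N : ℝ) ^ (-(r * (1 + α))) :=
  stmt11_general E T r α σ C₀ hT hα0 hσ0 hσ1 hC₀ N hN t₁ ht₁ f f' hf hf' hb
end

section
/- For the graded mesh t_n = T(n/N)^r with steps τ_n = t_n − t_{n−1}, and for 0 < α < 1, one has τ_m^{α/2} Σ_{j=1}^{m} τ_j^{1−α/2} ≤ r T for every m with 1 ≤ m ≤ N. -/
open Finset

theorem ConvexOn.map_add_sub_map_le {𝕜 : Type*} [Field 𝕜] [LinearOrder 𝕜] [IsStrictOrderedRing 𝕜]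
    {s : Set 𝕜} {f : 𝕜 → 𝕜} (hf : ConvexOn 𝕜 s f) {x y c : 𝕜} (hx : x ∈ s) (hyc : y + c ∈ s)
    (hxy : x ≤ y) (hc : 0 ≤ c) : f (x + c) - f x ≤ f (y + c) - f y := by
  rcases hxy.eq_or_lt with rfl | hxy
  · exact le_rfl
  rcases hc.eq_or_lt with rfl | hc
  · simp
  have hy : y ∈ s := hf.1.ordConnected.out hx hyc ⟨hxy.le, by linarith⟩
  have hxc : x + c ∈ s := hf.1.ordConnected.out hx hyc ⟨by linarith, by linarith⟩
  have left : (f (x + c) - f x) / c ≤ (f (y + c) - f x) / (y + c - x) := by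
    simpa using hf.secant_mono hx hxc hyc (by linarith) (by linarith) (by linarith)
  have right : (f (y + c) - f x) / (y + c - x) ≤ (f (y + c) - f y) / c := by
    have := hf.secant_mono hyc hx hy (by linarith) (by linarith) hxy.le
    rwa [← neg_div_neg_eq, ← neg_div_neg_eq (f y - _), neg_sub, neg_sub, neg_sub, neg_sub,
      add_sub_cancel_left] at this
  exact (div_le_div_iff_of_pos_right hc).1 (left.trans right)

theorem Real.rpow_sub_rpow_le_mul_rpow_sub_one {a b r : ℝ} (hr : 1 ≤ r) (ha : 0 ≤ a)
    (hab : a ≤ b) : b ^ r - a ^ r ≤ r * b ^ (r - 1) * (b - a) := by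
  rcases hab.eq_or_lt with rfl | hab
  · simp
  have hslope := (convexOn_rpow hr).slope_le_of_hasDerivAt ha (ha.trans hab.le) hab
    (Real.hasDerivAt_rpow_const (Or.inr hr))
  rw [slope_def_field, div_le_iff₀ (sub_pos.2 hab)] at hslope
  exact hslope

theorem meshT_mono {T r : ℝ} (hT : 0 ≤ T) (hr : 0 ≤ r) (N : ℕ) : Monotone (meshT T r N) :=
  fun _ _ h => mul_le_mul_of_nonneg_left (Real.rpow_le_rpow (by positivity)
    (div_le_div_of_nonneg_right (Nat.cast_le.2 h) N.cast_nonneg) hr) hT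

theorem meshTau_nonneg {T r : ℝ} (hT : 0 ≤ T) (hr : 0 ≤ r) (N n : ℕ) : 0 ≤ meshTau T r N n :=
  sub_nonneg.2 (meshT_mono hT hr N (Nat.sub_le n 1))

theorem meshTau_eq {T r : ℝ} {N n : ℕ} (hn : 1 ≤ n) :
    meshTau T r N n = T * (((n : ℝ) / N) ^ r - (((n : ℝ) - 1) / N) ^ r) := by
  rw [meshTau, meshT, meshT, Nat.cast_sub hn, Nat.cast_one, mul_sub]

theorem meshTau_le_meshTau {T r : ℝ} (hT : 0 ≤ T) (hr : 1 ≤ r) (N : ℕ) {j m : ℕ} (hj : 1 ≤ j)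
    (hjm : j ≤ m) : meshTau T r N j ≤ meshTau T r N m := by
  have hj' : (1 : ℝ) ≤ j := by exact_mod_cast hj
  have hjm' : (j : ℝ) ≤ m := by exact_mod_cast hjm
  have shift : ∀ n : ℝ, (n - 1) / N + 1 / N = n / N := fun n => by rw [← add_div, sub_add_cancel]
  have key := (convexOn_rpow hr).map_add_sub_map_le (x := ((j : ℝ) - 1) / N)
    (y := ((m : ℝ) - 1) / N) (c := 1 / N) (by simp only [Set.mem_Ici]; positivity)
    (by rw [shift]; simp only [Set.mem_Ici]; positivity)
    (div_le_div_of_nonneg_right (by linarith) N.cast_nonneg) (by positivity)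
  rw [shift, shift] at key
  rw [meshTau_eq hj, meshTau_eq (hj.trans hjm)]
  exact mul_le_mul_of_nonneg_left key hT

theorem natCast_mul_meshTau_le {T r : ℝ} (hT : 0 ≤ T) (hr : 1 ≤ r) {N m : ℕ} (hm : 1 ≤ m)
    (hmN : m ≤ N) : m * meshTau T r N m ≤ r * T := by
  have hN : (0 : ℝ) < N := by exact_mod_cast hm.trans hmN
  have hb : (0 : ℝ) < m / N := by positivity
  have hinc := Real.rpow_sub_rpow_le_mul_rpow_sub_one (a := ((m : ℝ) - 1) / N) (b := m / N) hr
    (div_nonneg (sub_nonneg.2 (by exact_mod_cast hm)) hN.le)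
    (div_le_div_of_nonneg_right (sub_le_self _ zero_le_one) hN.le)
  have hle_one : ((m : ℝ) / N) ^ r ≤ 1 :=
    Real.rpow_le_one hb.le ((div_le_one hN).2 (by exact_mod_cast hmN)) (by linarith)
  calc (m : ℝ) * meshTau T r N m
      ≤ m * (T * (r * ((m : ℝ) / N) ^ (r - 1) * ((m : ℝ) / N - ((m : ℝ) - 1) / N))) := by
        rw [meshTau_eq hm]; gcongr
    _ = r * T * ((m : ℝ) / N) ^ r := by
        rw [Real.rpow_sub_one hb.ne']; field_simp; ring
    _ ≤ r * T := mul_le_of_le_one_right (by positivity) hle_one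

theorem rpow_mul_sum_rpow_le_card_mul {ι : Type*} (s : Finset ι) {x : ι → ℝ} {y a : ℝ}
    (hy : 0 ≤ y) (ha : a ≤ 1) (hx : ∀ i ∈ s, 0 ≤ x i) (hxy : ∀ i ∈ s, x i ≤ y) :
    y ^ a * ∑ i ∈ s, x i ^ (1 - a) ≤ #s * y :=
  calc y ^ a * ∑ i ∈ s, x i ^ (1 - a) ≤ y ^ a * ∑ _i ∈ s, y ^ (1 - a) := by
        gcongr with i hi
        exacts [hx i hi, hxy i hi]
    _ = #s * (y ^ a * y ^ (1 - a)) := by rw [sum_const, nsmul_eq_mul]; ring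
    _ = #s * y := by rw [← Real.rpow_add' hy (by norm_num), add_sub_cancel, Real.rpow_one]

theorem stmt16_general (T r α : ℝ) (hT : 0 < T) (hr : 1 ≤ r) (hα1 : α < 1)
    (N : ℕ) :
    ∀ m : ℕ, 1 ≤ m → m ≤ N →
      (meshTau T r N m) ^ (α / 2) *
        (∑ j ∈ Finset.Icc 1 m, (meshTau T r N j) ^ (1 - α / 2)) ≤ r * T := by
  intro m hm hmN
  have hr0 : 0 ≤ r := by linarith
  calc _ ≤ (#(Icc 1 m) : ℝ) * meshTau T r N m :=
        rpow_mul_sum_rpow_le_card_mul _ (meshTau_nonneg hT.le hr0 N m) (by linarith)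
          (fun j _ => meshTau_nonneg hT.le hr0 N j)
          (fun j hj => meshTau_le_meshTau hT.le hr N (mem_Icc.1 hj).1 (mem_Icc.1 hj).2)
    _ = m * meshTau T r N m := by simp
    _ ≤ r * T := natCast_mul_meshTau_le hT.le hr hm hmN

/-- For the graded mesh and `0 < α < 1`,
`τ_m^{α/2} Σ_{j=1}^{m} τ_j^{1-α/2} ≤ r T` for every `1 ≤ m ≤ N`. -/
theorem stmt16 (T r α : ℝ) (hT : 0 < T) (hr : 1 ≤ r) (hα0 : 0 < α) (hα1 : α < 1)
    (N : ℕ) (hN : 2 ≤ N) :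
    ∀ m : ℕ, 1 ≤ m → m ≤ N →
      (meshTau T r N m) ^ (α / 2) *
        (∑ j ∈ Finset.Icc 1 m, (meshTau T r N j) ^ (1 - α / 2)) ≤ r * T :=
  stmt16_general T r α hT hr hα1 N
end
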